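/- For $k \geq 1$ and indices $i_1,\dots,i_k$ with $\alpha_{i_1}+\cdots+\alpha_{i_k} < 1$, the Littlewood-Paley pieces of the coherence functions satisfy $|(C^{i_1\dots i_k}_x)_j| \lesssim 2^{-j(\alpha_{i_1}+\cdots+\alpha_{i_k})}\|f_{i_1}\|_{\alpha_{i_1}}\cdots\|f_{i_k}\|_{\alpha_{i_k}}$, uniformly in $x \in \mathbb{R}^d$ and $j \geq -1$. -/

import Mathlib

noncomputable section

open MeasureTheory

/-- `d`-dimensional Euclidean space. -/
abbrev Ed (d : ℕ) := EuclideanSpace ℝ (Fin d)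

/-- A dyadic Littlewood–Paley partition of unity `(χ, ρ)` on `ℝ^d`. -/
structure LPPartition (d : ℕ) where
  chi : Ed d → ℝ
  rho : Ed d → ℝ
  smooth_chi : ContDiff ℝ (⊤ : ℕ∞) chi
  smooth_rho : ContDiff ℝ (⊤ : ℕ∞) rho
  supp_chi : ∀ x : Ed d, (4 / 3 : ℝ) ≤ ‖x‖ → chi x = 0
  supp_rho : ∀ x : Ed d, ‖x‖ ≤ (3 / 4 : ℝ) ∨ (8 / 3 : ℝ) ≤ ‖x‖ → rho x = 0
  partition : ∀ x : Ed d, chi x + ∑' j : ℕ, rho (((2 : ℝ) ^ j)⁻¹ • x) = 1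

/-- The Fourier symbol of the `n`-th Littlewood–Paley block; the index `n : ℕ`
corresponds to the usual index `j = n - 1 ≥ -1`, so `n = 0` is the block `Δ_{-1}`
given by `χ` and `n = j + 1` is the block `Δ_j` given by `ρ(2^{-j}·)` for `j ≥ 0`. -/
def lpSymbol {d : ℕ} (P : LPPartition d) : ℕ → Ed d → ℝ
  | 0 => P.chi
  | n + 1 => fun x => P.rho (((2 : ℝ) ^ n)⁻¹ • x)

/-- The Littlewood–Paley block `Δ_{n-1} f = ℱ⁻¹(ρ_{n-1} ℱ f)`, realized as the
convolution of `f` with the inverse Fourier transform of the symbol. -/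
def lpBlock {d : ℕ} (P : LPPartition d) (n : ℕ) (f : Ed d → ℝ) (x : Ed d) : ℝ :=
  (∫ y : Ed d,
    FourierTransformInv.fourierInv (fun v => (lpSymbol P n v : ℂ)) y * (f (x - y) : ℂ)).re

/-- `f` has `𝒞^α = B^α_{∞,∞}` Besov norm bounded by `M`:
`2^{jα} ‖Δ_j f‖_{L^∞} ≤ M` for all `j ≥ -1` (here `j = n - 1`). -/
def HolderBdd {d : ℕ} (P : LPPartition d) (α : ℝ) (f : Ed d → ℝ) (M : ℝ) : Prop :=
  ∀ (n : ℕ) (x : Ed d), (2 : ℝ) ^ (((n : ℝ) - 1) * α) * |lpBlock P n f x| ≤ M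

/-- `f` is the sum of its Littlewood–Paley blocks (pointwise). -/
def LPSum {d : ℕ} (P : LPPartition d) (f : Ed d → ℝ) : Prop :=
  ∀ x : Ed d, HasSum (fun n : ℕ => lpBlock P n f x) (f x)

/-- The Bony paraproduct `f ≺ g = ∑_{j < k - 1} Δ_j f Δ_k g`. -/
def para {d : ℕ} (P : LPPartition d) (f g : Ed d → ℝ) : Ed d → ℝ := fun x =>
  ∑' k : ℕ, (∑ m ∈ Finset.range (k - 1), lpBlock P m f x) * lpBlock P k g x

/-- The iterated paraproduct `(f₁, …, f_n)^≺ = (f₁, …, f_{n-1})^≺ ≺ f_n`. -/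
def iterPara {d : ℕ} (P : LPPartition d) : List (Ed d → ℝ) → Ed d → ℝ
  | [] => fun _ => 0
  | f :: fs => fs.foldl (para P) f

/-- The coherence remainder `ω_{yx}` associated with a family `F` of functions indexed
by words: `ω_{yx}(l) = F l (y) - F l (x) - ∑_{ℓ=1}^{k-1} F(l₁…l_ℓ)(x) ω_{yx}(l_{ℓ+1}…l_k)`,
defined by recursion on the length of the word (the first argument is the length). -/
def omGen {d : ℕ} {β : Type*} (F : List β → Ed d → ℝ) :
    ℕ → List β → Ed d → Ed d → ℝ
  | 0, _, _, _ => 0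
  | n + 1, l, y, x =>
      F l y - F l x -
        ∑ ℓ ∈ Finset.range n, F (l.take (ℓ + 1)) x * omGen F (n - ℓ) (l.drop (ℓ + 1)) y x
  termination_by n => n
  decreasing_by omega

end

/-- The blocks `(f^{i₁…i_k})_j` of the modified iterated products, for a word given as
a list in *reversed* order `[f_{i_k}, …, f_{i₁}]` (the index `n : ℕ` is `j = n - 1`). -/
noncomputable def revModBlock {d : ℕ} (P : LPPartition d) :
    List (Ed d → ℝ) → ℕ → Ed d → ℝ
  | [], _, _ => 0
  | [f], n, x => lpBlock P n f x
  | f :: g :: rest, n, x =>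
      (∑ m ∈ Finset.range (n - 1), revModBlock P (g :: rest) m x) * lpBlock P n f x

/-- The modified iterated product `f^{i₁…i_k} = ∑_j (f^{i₁…i_k})_j` (reversed word). -/
noncomputable def wordFn {d : ℕ} (P : LPPartition d) (l : List (Ed d → ℝ)) (x : Ed d) : ℝ :=
  ∑' n : ℕ, revModBlock P l n x

/-- The blocks `(ω^{i₁…i_k}_{yx})_j := (f^{i₁…i_k})_j(y) - (f^{i₁…i_k})_j(x)
- ∑_{ℓ=1}^{k-1} f^{i₁…i_ℓ}(x) (ω^{i_{ℓ+1}…i_k}_{yx})_j`, for a reversed word; the first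
argument is the length of the word (recursion fuel). -/
noncomputable def omB {d : ℕ} (P : LPPartition d) :
    ℕ → List (Ed d → ℝ) → ℕ → Ed d → Ed d → ℝ
  | 0, _, _, _, _ => 0
  | n + 1, r, j, y, x =>
      revModBlock P r j y - revModBlock P r j x -
        ∑ i ∈ Finset.range n,
          wordFn P (r.drop (n - i)) x * omB P (n - i) (r.take (n - i)) j y x
  termination_by n => n
  decreasing_by omega

/-- The blocks `(C^{i₁…i_k}_x)_j := (f^{i₁…i_k})_j(x)
- ∑_{ℓ=1}^{k-1} f^{i₁…i_ℓ}(x) (C^{i_{ℓ+1}…i_k}_x)_j`, for a reversed word; the first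
argument is the length of the word (recursion fuel). -/
noncomputable def cB {d : ℕ} (P : LPPartition d) :
    ℕ → List (Ed d → ℝ) → ℕ → Ed d → ℝ
  | 0, _, _, _ => 0
  | n + 1, r, j, x =>
      revModBlock P r j x -
        ∑ i ∈ Finset.range n,
          wordFn P (r.drop (n - i)) x * cB P (n - i) (r.take (n - i)) j x
  termination_by n => n
  decreasing_by omega


section CoherenceAux
variable {d : ℕ} (P : LPPartition d)
lemma cB_succ (n : ℕ) (r : List (Ed d → ℝ)) (j : ℕ) (x : Ed d) :
    cB P (n + 1) r j x =
      revModBlock P r j x -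
        ∑ i ∈ Finset.range n,
          wordFn P (r.drop (n - i)) x * cB P (n - i) (r.take (n - i)) j x := by
  rw [cB]

lemma revModBlock_cons (f : Ed d → ℝ) {s : List (Ed d → ℝ)} (hs : s ≠ []) (n : ℕ) (x : Ed d) :
    revModBlock P (f :: s) n x =
      (∑ m ∈ Finset.range (n - 1), revModBlock P s m x) * lpBlock P n f x := by
  cases s with
  | nil => exact absurd rfl hs
  | cons g rest => rw [revModBlock]

lemma cB_one (f : Ed d → ℝ) (j : ℕ) (x : Ed d) :
    cB P 1 [f] j x = lpBlock P j f x := by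
  rw [cB_succ]; simp [revModBlock]

lemma cB_cons_eq (x : Ed d) : ∀ (n : ℕ) (s : List (Ed d → ℝ)), s.length = n → 1 ≤ n →
    (∀ ℓ, 1 ≤ ℓ → ℓ ≤ n → Summable (fun m => cB P ℓ (s.take ℓ) m x)) →
    ∀ (f : Ed d → ℝ) (j : ℕ),
      cB P (n + 1) (f :: s) j x
        = -(∑' m : ℕ, cB P n s (m + (j - 1)) x) * lpBlock P j f x := by
  intro n
  induction n using Nat.strong_induction_on with
  | _ n IH =>
  intro s hlen hn hsumm f j
  obtain ⟨n', rfl⟩ : ∃ n', n = n' + 1 := ⟨n - 1, by omega⟩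
  have hsne : s ≠ [] := by intro h; rw [h] at hlen; simp at hlen
  have hstake : s.take (n' + 1) = s := by
    rw [← hlen, List.take_length]
  have hsum_n : Summable (fun m => cB P (n' + 1) s m x) := by
    have := hsumm (n' + 1) (by omega) le_rfl
    rwa [hstake] at this
  set J := j - 1 with hJ
  set B := lpBlock P j f x with hB
  set R : ℕ → ℝ := fun m => revModBlock P s m x with hR
  set T : ℕ → ℝ := fun ℓ => ∑' m : ℕ, cB P ℓ (s.take ℓ) (m + J) x with hT
  set W : ℕ → ℝ := fun t => wordFn P (s.drop t) x with hW
  -- summability of each prefix term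
  have hsumg : ∀ i ∈ Finset.range n',
      Summable (fun m => wordFn P (s.drop (n' - i)) x * cB P (n' - i) (s.take (n' - i)) m x) := by
    intro i hi
    exact (hsumm (n' - i) (by simp at hi; omega) (by omega)).mul_left _
  have hsumS : Summable (fun m => ∑ i ∈ Finset.range n',
      wordFn P (s.drop (n' - i)) x * cB P (n' - i) (s.take (n' - i)) m x) :=
    summable_sum hsumg
  have hexp : ∀ m, R m = cB P (n' + 1) s m x + ∑ i ∈ Finset.range n',
      wordFn P (s.drop (n' - i)) x * cB P (n' - i) (s.take (n' - i)) m x := by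
    intro m; rw [cB_succ]; ring
  have hRsum : Summable R := by
    have : R = fun m => cB P (n' + 1) s m x + ∑ i ∈ Finset.range n',
        wordFn P (s.drop (n' - i)) x * cB P (n' - i) (s.take (n' - i)) m x := funext hexp
    rw [this]; exact hsum_n.add hsumS
  -- the key tsum computation
  have key : (∑' m : ℕ, cB P (n' + 1) s (m + J) x)
      = wordFn P s x - ∑ m ∈ Finset.range J, R m
        - ∑ i ∈ Finset.range n', W (n' - i) * T (n' - i) := by
    have e1 : ∀ m : ℕ, cB P (n' + 1) s (m + J) x
        = R (m + J) - ∑ i ∈ Finset.range n',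
            wordFn P (s.drop (n' - i)) x * cB P (n' - i) (s.take (n' - i)) (m + J) x := by
      intro m; rw [cB_succ]
    rw [tsum_congr e1, Summable.tsum_sub ((summable_nat_add_iff J).2 hRsum)
      ((summable_nat_add_iff J).2 hsumS)]
    congr 1
    · have := Summable.sum_add_tsum_nat_add J hRsum
      have hword : (∑' m : ℕ, R m) = wordFn P s x := rfl
      linarith [this, hword ▸ this]
    · rw [Summable.tsum_finsetSum (fun i hi => (summable_nat_add_iff J).2 (hsumg i hi))]
      refine Finset.sum_congr rfl fun i hi => ?_
      rw [tsum_mul_left]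
  -- expand the LHS
  rw [cB_succ, revModBlock_cons P f hsne, Finset.sum_range_succ]
  have e2 : n' + 1 - n' = 1 := by omega
  rw [e2]
  have e3 : (f :: s).drop 1 = s := rfl
  have e4 : (f :: s).take 1 = [f] := rfl
  rw [e3, e4, cB_one]
  have hterm : ∀ i ∈ Finset.range n',
      wordFn P ((f :: s).drop (n' + 1 - i)) x * cB P (n' + 1 - i) ((f :: s).take (n' + 1 - i)) j x
        = W (n' - i) * (-(T (n' - i)) * B) := by
    intro i hi
    have hi' : i < n' := Finset.mem_range.mp hi
    have e5 : n' + 1 - i = (n' - i) + 1 := by omega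
    rw [e5, List.drop_succ_cons, List.take_succ_cons]
    congr 1
    have hlen' : (s.take (n' - i)).length = n' - i := by
      rw [List.length_take]; omega
    have hsub : ∀ ℓ, 1 ≤ ℓ → ℓ ≤ n' - i →
        Summable (fun m => cB P ℓ ((s.take (n' - i)).take ℓ) m x) := by
      intro ℓ h1 h2
      rw [List.take_take, min_eq_left (by omega)]
      exact hsumm ℓ h1 (by omega)
    exact IH (n' - i) (by omega) (s.take (n' - i)) hlen' (by omega) hsub f j
  rw [Finset.sum_congr rfl hterm]
  have e6 : ∑ i ∈ Finset.range n', W (n' - i) * (-(T (n' - i)) * B)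
      = (∑ i ∈ Finset.range n', W (n' - i) * T (n' - i)) * (-B) := by
    rw [Finset.sum_mul]
    exact Finset.sum_congr rfl fun i _ => by ring
  rw [e6, key]
  ring

lemma holder_nonneg {α : ℝ} {f : Ed d → ℝ} {M : ℝ} (h : HolderBdd P α f M) : 0 ≤ M :=
  le_trans (mul_nonneg (Real.rpow_nonneg (by norm_num) _) (abs_nonneg _)) (h 0 0)

lemma holder_abs_le {α : ℝ} {f : Ed d → ℝ} {M : ℝ} (h : HolderBdd P α f M) (n : ℕ) (x : Ed d) :
    |lpBlock P n f x| ≤ (2 : ℝ) ^ (-(((n : ℝ)) - 1) * α) * M := by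
  have hp : (0 : ℝ) < (2 : ℝ) ^ ((((n : ℝ)) - 1) * α) := Real.rpow_pos_of_pos (by norm_num) _
  rw [neg_mul, Real.rpow_neg (by norm_num), inv_mul_eq_div, le_div_iff₀' hp]
  exact h n x

lemma rpow_shape (σ : ℝ) (m : ℕ) :
    (2 : ℝ) ^ (-((m : ℝ) - 1) * σ) = (2 : ℝ) ^ σ * ((2 : ℝ) ^ (-σ)) ^ m := by
  rw [← Real.rpow_natCast ((2 : ℝ) ^ (-σ)) m, ← Real.rpow_mul (by norm_num),
    ← Real.rpow_add (by norm_num)]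
  congr 1; ring

lemma summable_shape {σ : ℝ} (hσ : 0 < σ) (c : ℝ) :
    Summable (fun m : ℕ => c * (2 : ℝ) ^ (-((m : ℝ) - 1) * σ)) := by
  have hq0 : (0 : ℝ) ≤ (2 : ℝ) ^ (-σ) := Real.rpow_nonneg (by norm_num) _
  have hq1 : (2 : ℝ) ^ (-σ) < 1 :=
    Real.rpow_lt_one_of_one_lt_of_neg (by norm_num) (by linarith)
  have := ((summable_geometric_of_lt_one hq0 hq1).mul_left (c * (2 : ℝ) ^ σ))
  refine this.congr fun m => ?_
  rw [rpow_shape]; ring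

lemma tail_shape {σ : ℝ} (hσ : 0 < σ) (J : ℕ) :
    (∑' m : ℕ, (2 : ℝ) ^ (-(((m + J : ℕ) : ℝ) - 1) * σ))
      = (1 - (2 : ℝ) ^ (-σ))⁻¹ * (2 : ℝ) ^ (-((J : ℝ) - 1) * σ) := by
  have hq0 : (0 : ℝ) ≤ (2 : ℝ) ^ (-σ) := Real.rpow_nonneg (by norm_num) _
  have hq1 : (2 : ℝ) ^ (-σ) < 1 :=
    Real.rpow_lt_one_of_one_lt_of_neg (by norm_num) (by linarith)
  have e : ∀ m : ℕ, (2 : ℝ) ^ (-(((m + J : ℕ) : ℝ) - 1) * σ)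
      = (2 : ℝ) ^ (-((J : ℝ) - 1) * σ) * ((2 : ℝ) ^ (-σ)) ^ m := by
    intro m
    rw [← Real.rpow_natCast ((2 : ℝ) ^ (-σ)) m, ← Real.rpow_mul (by norm_num),
      ← Real.rpow_add (by norm_num)]
    congr 1; push_cast; ring
  rw [tsum_congr e, tsum_mul_left, tsum_geometric_of_lt_one hq0 hq1]
  ring

lemma prod_snd_nonneg : ∀ {A : List ℝ} {L : List ((Ed d → ℝ) × ℝ)},
    List.Forall₂ (fun a p => HolderBdd P a p.1 p.2) A L → 0 ≤ (L.map Prod.snd).prod := by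
  intro A L h
  induction h with
  | nil => simp
  | cons h _ ih => simpa using mul_nonneg (holder_nonneg P h) ih

lemma cB_bound : ∀ (n : ℕ), 1 ≤ n → ∀ (A : List ℝ), A.length = n → (∀ a ∈ A, 0 < a) →
    ∃ K : ℝ, 0 < K ∧ ∀ (L : List ((Ed d → ℝ) × ℝ)),
      List.Forall₂ (fun a p => HolderBdd P a p.1 p.2) A L →
      ∀ (j : ℕ) (x : Ed d),
        |cB P n (L.map Prod.fst) j x|
          ≤ K * (2 : ℝ) ^ (-((j : ℝ) - 1) * A.sum) * (L.map Prod.snd).prod := by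
  intro n
  induction n using Nat.strong_induction_on with
  | _ n IH =>
  intro hn A hA hpos
  obtain ⟨n', rfl⟩ : ∃ n', n = n' + 1 := ⟨n - 1, by omega⟩
  obtain ⟨a, A'', rfl⟩ : ∃ a A'', A = a :: A'' := by
    cases A with
    | nil => simp at hA
    | cons a A'' => exact ⟨a, A'', rfl⟩
  have hA'' : A''.length = n' := by simpa using hA
  have ha : 0 < a := hpos a (by simp)
  rcases Nat.eq_zero_or_pos n' with h0 | hn'
  · -- base case : single letter
    subst h0
    refine ⟨1, one_pos, ?_⟩
    intro L hF j x
    have hA0 : A'' = [] := List.eq_nil_of_length_eq_zero hA''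
    subst hA0
    rcases hF with _ | ⟨hp, hF'⟩
    cases hF'
    simp only [List.map_cons, List.map_nil, List.prod_cons, List.prod_nil, mul_one,
      List.sum_cons, List.sum_nil, add_zero, one_mul]
    rw [cB_one]
    exact holder_abs_le P hp j x
  · -- inductive case
    obtain ⟨K', hK', hbound'⟩ := IH n' (by omega) hn' A'' hA''
      (fun b hb => hpos b (by simp [hb]))
    set σ := A''.sum with hσdef
    have hσ : 0 < σ := List.sum_pos A'' (fun b hb => hpos b (by simp [hb]))
      (by intro h; rw [h] at hA''; simp at hA''; omega)
    have hq0 : (0 : ℝ) ≤ (2 : ℝ) ^ (-σ) := Real.rpow_nonneg (by norm_num) _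
    have hq1 : (2 : ℝ) ^ (-σ) < 1 :=
      Real.rpow_lt_one_of_one_lt_of_neg (by norm_num) (by linarith)
    have hinv : 0 < (1 - (2 : ℝ) ^ (-σ))⁻¹ := by
      apply inv_pos.mpr; linarith
    refine ⟨K' * (1 - (2 : ℝ) ^ (-σ))⁻¹ * (2 : ℝ) ^ σ, by positivity, ?_⟩
    intro L hF j x
    obtain ⟨p, L'', rfl⟩ : ∃ p L'', L = p :: L'' := by
      cases hF with
      | cons _ _ => exact ⟨_, _, rfl⟩
    obtain ⟨hp, hF''⟩ : HolderBdd P a p.1 p.2 ∧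
        List.Forall₂ (fun a p => HolderBdd P a p.1 p.2) A'' L'' := by
      cases hF with | cons h1 h2 => exact ⟨h1, h2⟩
    set s := L''.map Prod.fst with hsdef
    set PP := (L''.map Prod.snd).prod with hPPdef
    have hPP : 0 ≤ PP := prod_snd_nonneg P hF''
    have hslen : s.length = n' := by
      have hLL : A''.length = L''.length := hF''.length_eq
      rw [hsdef, List.length_map]; omega
    -- the uniform bound coming from the IH, with all L'' M's
    have hbig : ∀ m : ℕ, |cB P n' s m x| ≤ (K' * PP) * (2 : ℝ) ^ (-((m : ℝ) - 1) * σ) := by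
      intro m
      calc |cB P n' s m x| ≤ K' * (2 : ℝ) ^ (-((m : ℝ) - 1) * σ) * PP :=
            hbound' L'' hF'' m x
        _ = (K' * PP) * (2 : ℝ) ^ (-((m : ℝ) - 1) * σ) := by ring
    -- summability for all prefixes
    have hsumm : ∀ ℓ, 1 ≤ ℓ → ℓ ≤ n' → Summable (fun m => cB P ℓ (s.take ℓ) m x) := by
      intro ℓ h1 h2
      obtain ⟨Kℓ, hKℓ, hbℓ⟩ := IH ℓ (by omega) h1 (A''.take ℓ)
        (by rw [List.length_take]; omega)
        (fun b hb => hpos b (by simp [List.mem_of_mem_take hb]))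
      have hFt : List.Forall₂ (fun a p => HolderBdd P a p.1 p.2) (A''.take ℓ) (L''.take ℓ) :=
        List.forall₂_take ℓ hF''
      have hσℓ : 0 < (A''.take ℓ).sum := by
        apply List.sum_pos _ (fun b hb => hpos b (by simp [List.mem_of_mem_take hb]))
        exact List.length_pos_iff.mp (by rw [List.length_take]; omega)
      apply summable_abs_iff.mp
      apply Summable.of_nonneg_of_le (fun m => abs_nonneg _)
        (fun m => ?_) (summable_shape hσℓ (Kℓ * ((L''.take ℓ).map Prod.snd).prod))
      · calc |cB P ℓ (s.take ℓ) m x|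
            = |cB P ℓ ((L''.take ℓ).map Prod.fst) m x| := by rw [hsdef, List.map_take]
          _ ≤ Kℓ * (2 : ℝ) ^ (-((m : ℝ) - 1) * (A''.take ℓ).sum)
                * ((L''.take ℓ).map Prod.snd).prod := hbℓ (L''.take ℓ) hFt m x
          _ = Kℓ * ((L''.take ℓ).map Prod.snd).prod
                * (2 : ℝ) ^ (-((m : ℝ) - 1) * (A''.take ℓ).sum) := by ring
    -- apply the identity
    have hid := cB_cons_eq P x n' s hslen hn' hsumm p.1 j
    set J := j - 1 with hJ
    have lhs_eq : (L''.map Prod.fst).take n' = s.take n' := by rw [hsdef]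
    have hLmap : ((p :: L'').map Prod.fst) = p.1 :: s := by simp [hsdef]
    rw [hLmap, hid, abs_mul, abs_neg]
    -- bound the tail sum
    have hbase : Summable (fun m => cB P n' s m x) := by
      have := hsumm n' hn' le_rfl
      rwa [show s.take n' = s by rw [← hslen, List.take_length]] at this
    have hsumcb : Summable (fun m => cB P n' s (m + J) x) :=
      (summable_nat_add_iff (f := fun m => cB P n' s m x) J).2 hbase
    have hsumabs : Summable (fun m => |cB P n' s (m + J) x|) :=
      Summable.of_nonneg_of_le (fun m => abs_nonneg _) (fun m => hbig (m + J))
        ((summable_nat_add_iff (f := fun m : ℕ => (K' * PP) * (2 : ℝ) ^ (-((m : ℝ) - 1) * σ)) J).2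
          (summable_shape hσ (K' * PP)))
    have habs_tsum : |∑' m : ℕ, cB P n' s (m + J) x| ≤ ∑' m : ℕ, |cB P n' s (m + J) x| := by
      have := norm_tsum_le_tsum_norm (f := fun m => cB P n' s (m + J) x) (by simpa [Real.norm_eq_abs] using hsumabs)
      simpa [Real.norm_eq_abs] using this
    have hshape_summ : Summable (fun m : ℕ => (K' * PP) * (2 : ℝ) ^ (-(((m + J : ℕ) : ℝ) - 1) * σ)) := by
      have := (summable_nat_add_iff (f := fun m : ℕ => (K' * PP) * (2 : ℝ) ^ (-((m : ℝ) - 1) * σ)) J).2 (summable_shape hσ (K' * PP))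
      refine this.congr fun m => by push_cast; ring_nf
    have htail : (∑' m : ℕ, |cB P n' s (m + J) x|)
        ≤ (K' * PP) * ((1 - (2 : ℝ) ^ (-σ))⁻¹ * (2 : ℝ) ^ (-((J : ℝ) - 1) * σ)) := by
      calc (∑' m : ℕ, |cB P n' s (m + J) x|)
          ≤ ∑' m : ℕ, (K' * PP) * (2 : ℝ) ^ (-(((m + J : ℕ) : ℝ) - 1) * σ) := by
            apply Summable.tsum_le_tsum _ hsumabs hshape_summ
            intro m
            have := hbig (m + J)
            calc |cB P n' s (m + J) x| ≤ (K' * PP) * (2 : ℝ) ^ (-(((m + J : ℕ) : ℝ)) * σ + σ) := by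
                  refine le_trans this (le_of_eq ?_)
                  congr 1; push_cast; ring
              _ = (K' * PP) * (2 : ℝ) ^ (-(((m + J : ℕ) : ℝ) - 1) * σ) := by
                  congr 1; congr 1; push_cast; ring
        _ = (K' * PP) * ∑' m : ℕ, (2 : ℝ) ^ (-(((m + J : ℕ) : ℝ) - 1) * σ) := tsum_mul_left
        _ = (K' * PP) * ((1 - (2 : ℝ) ^ (-σ))⁻¹ * (2 : ℝ) ^ (-((J : ℝ) - 1) * σ)) := by
            rw [tail_shape hσ]
    -- J = j - 1 ≥ j - 1 as reals
    have hJreal : ((j : ℝ) - 1) ≤ (J : ℝ) := by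
      have : j ≤ J + 1 := by omega
      have := (Nat.cast_le (α := ℝ)).2 this
      push_cast at this; linarith
    have hJexp : (2 : ℝ) ^ (-((J : ℝ) - 1) * σ) ≤ (2 : ℝ) ^ σ * (2 : ℝ) ^ (-((j : ℝ) - 1) * σ) := by
      rw [← Real.rpow_add (by norm_num)]
      apply Real.rpow_le_rpow_of_exponent_le (by norm_num)
      nlinarith
    -- the block bound
    have hB : |lpBlock P j p.1 x| ≤ (2 : ℝ) ^ (-((j : ℝ) - 1) * a) * p.2 := holder_abs_le P hp j x
    -- combine
    have hM : 0 ≤ p.2 := holder_nonneg P hp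
    have hC1 : |∑' m : ℕ, cB P n' s (m + J) x|
        ≤ (K' * PP) * ((1 - (2 : ℝ) ^ (-σ))⁻¹ * ((2 : ℝ) ^ σ * (2 : ℝ) ^ (-((j : ℝ) - 1) * σ))) := by
      refine le_trans (le_trans habs_tsum htail) ?_
      apply mul_le_mul_of_nonneg_left _ (by positivity)
      exact mul_le_mul_of_nonneg_left hJexp (le_of_lt hinv)
    calc |∑' m : ℕ, cB P n' s (m + J) x| * |lpBlock P j p.1 x|
        ≤ ((K' * PP) * ((1 - (2 : ℝ) ^ (-σ))⁻¹ * ((2 : ℝ) ^ σ * (2 : ℝ) ^ (-((j : ℝ) - 1) * σ))))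
            * ((2 : ℝ) ^ (-((j : ℝ) - 1) * a) * p.2) :=
          mul_le_mul hC1 hB (abs_nonneg _) (by positivity)
      _ = K' * (1 - (2 : ℝ) ^ (-σ))⁻¹ * (2 : ℝ) ^ σ
            * ((2 : ℝ) ^ (-((j : ℝ) - 1) * σ) * (2 : ℝ) ^ (-((j : ℝ) - 1) * a))
            * ((p :: L'').map Prod.snd).prod := by
          simp only [List.map_cons, List.prod_cons, ← hPPdef]
          ring
      _ = K' * (1 - (2 : ℝ) ^ (-σ))⁻¹ * (2 : ℝ) ^ σ
            * (2 : ℝ) ^ (-((j : ℝ) - 1) * (a :: A'').sum)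
            * ((p :: L'').map Prod.snd).prod := by
          rw [← Real.rpow_add (by norm_num)]
          congr 2
          simp only [List.sum_cons, ← hσdef]
          ring

lemma forall₂_ofFn {γ δ : Type*} {R : γ → δ → Prop} : ∀ {k : ℕ} {u : Fin k → γ} {v : Fin k → δ},
    (∀ i, R (u i) (v i)) → List.Forall₂ R (List.ofFn u) (List.ofFn v) := by
  intro k
  induction k with
  | zero => intro u v h; simp [List.ofFn_zero]
  | succ k ih =>
    intro u v h
    rw [List.ofFn_succ, List.ofFn_succ]
    exact List.Forall₂.cons (h 0) (ih (fun i => h i.succ))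

end CoherenceAux

/-- Bound for the blocks of the coherence functions: for a word `(i₁…i_k)` with
`α_{i₁} + ⋯ + α_{i_k} < 1`,
`|(C^{i₁…i_k}_x)_j| ≲ 2^{-j(α_{i₁}+⋯+α_{i_k})} ‖f_{i₁}‖_{α_{i₁}} ⋯ ‖f_{i_k}‖_{α_{i_k}}`,
uniformly in `x` and `j`. -/
theorem coherence_block_bound (d k : ℕ) (P : LPPartition d) (α : Fin (k + 1) → ℝ)
    (hα : ∀ i, α i ∈ Set.Ioo (0 : ℝ) 1) (hsum : (∑ i, α i) < 1) :
    ∃ K : ℝ, 0 < K ∧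
      ∀ (f : Fin (k + 1) → Ed d → ℝ) (M : Fin (k + 1) → ℝ),
        (∀ i, HolderBdd P (α i) (f i) (M i)) →
        ∀ (j : ℕ) (x : Ed d),
          |cB P (k + 1) (List.ofFn f).reverse j x| ≤
            K * (2 : ℝ) ^ (-((j : ℝ) - 1) * ∑ i, α i) * ∏ i, M i := by
  obtain ⟨K, hK, hb⟩ := cB_bound P (k + 1) (by omega) ((List.ofFn α).reverse)
    (by simp)
    (by
      intro a ha
      simp only [List.mem_reverse, List.mem_ofFn] at ha
      obtain ⟨i, rfl⟩ := ha
      exact (hα i).1)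
  refine ⟨K, hK, ?_⟩
  intro f M hfM j x
  set L := (List.ofFn (fun i => (f i, M i))).reverse with hL
  have hF : List.Forall₂ (fun a p => HolderBdd P a p.1 p.2) ((List.ofFn α).reverse) L := by
    rw [hL, List.forall₂_reverse_iff]
    exact forall₂_ofFn hfM
  have h1 : L.map Prod.fst = (List.ofFn f).reverse := by
    rw [hL, List.map_reverse, List.map_ofFn]
    rfl
  have h2 : (L.map Prod.snd).prod = ∏ i, M i := by
    rw [hL, List.map_reverse, List.prod_reverse, List.map_ofFn]
    exact List.prod_ofFn
  have h3 : ((List.ofFn α).reverse).sum = ∑ i, α i := by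
    rw [List.sum_reverse]
    exact List.sum_ofFn
  have := hb L hF j x
  rw [h1, h2, h3] at this
  exact this
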